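/- For any 2d-th-order tensor W ∈ ℝ^{p_1×⋯×p_d×p_1×⋯×p_d}, the dual norms of the SSN and SN norms satisfy the upper bounds ‖W‖_{SSN*} ≤ 2^{−2(d−1)} Σ_{k=1}^{2^{d−1}} ‖W_{[I_k]}‖_op and ‖W‖_{SN*} ≤ (2d)^{−2} Σ_{i=1}^{2d} ‖W_{(i)}‖_op. -/

import Mathlib

open scoped Classical
open MeasureTheory ProbabilityTheory Filter Matrix

noncomputable section

namespace TAR

/-- Mode labels of a `2d`-th order transition tensor: `Sum.inl k` is mode `k+1`
(a "predictor" mode among the first `d`), `Sum.inr k` is mode `d+k+1` (a "response" mode). -/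
abbrev Modes (d : ℕ) := Fin d ⊕ Fin d

variable {d : ℕ} {p : Fin d → ℕ}

/-- Multi-index of a `d`-th order tensor with dimensions `p 0, …, p (d-1)`. -/
abbrev TIndex (p : Fin d → ℕ) := ∀ i : Fin d, Fin (p i)

/-- A `d`-th order tensor in `ℝ^{p₁ × ⋯ × p_d}`. -/
abbrev Tensor (p : Fin d → ℕ) := TIndex p → ℝ

/-- A `2d`-th order tensor in `ℝ^{p₁ × ⋯ × p_d × p₁ × ⋯ × p_d}`; the first argument carries
modes `1,…,d` and the second argument modes `d+1,…,2d`. -/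
abbrev Tensor2 (p : Fin d → ℕ) := TIndex p → TIndex p → ℝ

/-- Dimension of each mode of a `2d`-th order tensor (`p_{d+i} = p_i`). -/
def mdim (p : Fin d → ℕ) : Modes d → ℕ := Sum.elim p p

/-- Generalized inner product `⟨𝒜, 𝒴⟩` contracting the first `d` modes of `𝒜` against `𝒴`. -/
def contract (A : Tensor2 p) (Y : Tensor p) : Tensor p := fun j => ∑ i, A i j * Y i

/-- Frobenius norm of a `d`-th order tensor. -/
def tfrob (X : Tensor p) : ℝ := Real.sqrt (∑ i, X i ^ 2)

/-- Frobenius norm of a `2d`-th order tensor. -/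
def t2frob (A : Tensor2 p) : ℝ := Real.sqrt (∑ i, ∑ j, A i j ^ 2)

/-- Entrywise inner product of `2d`-th order tensors. -/
def t2inner (A B : Tensor2 p) : ℝ := ∑ i, ∑ j, A i j * B i j

/-- Tensor outer product `𝒴 ∘ 𝒳` of two `d`-th order tensors. -/
def touter (Y X : Tensor p) : Tensor2 p := fun i j => Y i * X j

/-- The `p × p` transition matrix `𝒜_{[S₂]}` of the VAR(1) representation:
`(varMat A) j i = A i j`, rows indexed by the response modes. -/
def varMat (A : Tensor2 p) : Matrix (TIndex p) (TIndex p) ℝ := Matrix.of fun j i => A i j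

/-- Multi-mode matricization `𝒜_{[S]}`: the modes in `S` index rows, the others columns. -/
def mmat (S : Set (Modes d)) (A : Tensor2 p) :
    Matrix (∀ m : S, Fin (mdim p (m : Modes d)))
      (∀ m : (Sᶜ : Set (Modes d)), Fin (mdim p (m : Modes d))) ℝ :=
  Matrix.of fun rIdx cIdx =>
    A (fun k => if h : Sum.inl k ∈ S then rIdx ⟨Sum.inl k, h⟩ else cIdx ⟨Sum.inl k, h⟩)
      (fun k => if h : Sum.inr k ∈ S then rIdx ⟨Sum.inr k, h⟩ else cIdx ⟨Sum.inr k, h⟩)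

/-- One-mode matricization `𝒜_{(m)}`. -/
def umat (m : Modes d) (A : Tensor2 p) := mmat {m} A

/-- The index set `S₁ = {1,…,d}`. -/
def S1 (d : ℕ) : Set (Modes d) := Set.range Sum.inl

/-- Singular values of a real matrix (the square roots of the eigenvalues of `Mᴴ M`;
those with index beyond the rank are zero). -/
def singVals {m n : Type*} [Fintype m] [Fintype n] [DecidableEq n] (M : Matrix m n ℝ) :
    n → ℝ :=
  fun i => Real.sqrt ((show (Mᵀ * M).IsHermitian by
    simpa only [Matrix.conjTranspose_eq_transpose_of_trivial] using
      Matrix.isHermitian_conjTranspose_mul_self M).eigenvalues i)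

/-- Nuclear norm of a real matrix: the sum of its singular values. -/
def nucNorm {m n : Type*} [Fintype m] [Fintype n] [DecidableEq n] (M : Matrix m n ℝ) : ℝ :=
  ∑ i, singVals M i

/-- Operator norm (largest singular value) of a real matrix. -/
def opNorm {m n : Type*} [Fintype m] [Fintype n] (M : Matrix m n ℝ) : ℝ :=
  sSup {r | ∃ v : n → ℝ, (∑ j, v j ^ 2) ≤ 1 ∧ r = Real.sqrt (∑ i, (M.mulVec v i) ^ 2)}

/-- Selector of a square matricization: `ε i = false` picks mode `i`, `ε i = true`
picks mode `d + i`; the first mode is always `ℓ₁ = 1`.  There are `2^(d-1)` of these. -/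
abbrev SqSel (d : ℕ) [NeZero d] := {ε : Fin d → Bool // ε 0 = false}

/-- The index set `I = {ℓ₁, …, ℓ_d}` of a square matricization. -/
def sqSet (ε : Fin d → Bool) : Set (Modes d) :=
  {x | Sum.elim (fun i => ε i = false) (fun i => ε i = true) x}

/-- Sum of square-matrix nuclear (SSN) norm. -/
def ssnNorm [NeZero d] (A : Tensor2 p) : ℝ :=
  ∑ ε : SqSel d, nucNorm (mmat (sqSet ε.1) A)

/-- Sum of nuclear (SN) norm: sum of the nuclear norms of all one-mode matricizations. -/
def snNorm (A : Tensor2 p) : ℝ := ∑ m : Modes d, nucNorm (umat m A)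

/-- Dual norm of the SSN norm. -/
def ssnDual [NeZero d] (W : Tensor2 p) : ℝ :=
  sSup {r | ∃ T : Tensor2 p, ssnNorm T ≤ 1 ∧ r = t2inner W T}

/-- Dual norm of the SN norm. -/
def snDual (W : Tensor2 p) : ℝ :=
  sSup {r | ∃ T : Tensor2 p, snNorm T ≤ 1 ∧ r = t2inner W T}

/-- `x ^ q` with the convention `0 ^ 0 = 0`. -/
def powq (q x : ℝ) : ℝ := if x = 0 then 0 else x ^ q

/-- The approximately-low-rank ball `𝔹_q(r; ·, ·)`: the sum of the `q`-th powers of the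
singular values is at most `r` (with the convention `0^0 = 0`). -/
def memBq {m n : Type*} [Fintype m] [Fintype n] [DecidableEq n]
    (M : Matrix m n ℝ) (q r : ℝ) : Prop :=
  ∑ i, powq q (singVals M i) ≤ r

/-- Smallest eigenvalue of a (symmetric) real matrix, via the Rayleigh quotient. -/
def lamMinR {n : Type*} [Fintype n] (B : Matrix n n ℝ) : ℝ :=
  sInf {r | ∃ v : n → ℝ, (∑ i, v i ^ 2) = 1 ∧ r = dotProduct v (B.mulVec v)}

/-- Largest eigenvalue of a (symmetric) real matrix, via the Rayleigh quotient. -/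
def lamMaxR {n : Type*} [Fintype n] (B : Matrix n n ℝ) : ℝ :=
  sSup {r | ∃ v : n → ℝ, (∑ i, v i ^ 2) = 1 ∧ r = dotProduct v (B.mulVec v)}

/-- Smallest eigenvalue of a (Hermitian) complex matrix, via the Rayleigh quotient. -/
def lamMinC {n : Type*} [Fintype n] (B : Matrix n n ℂ) : ℝ :=
  sInf {r | ∃ v : n → ℂ,
    (∑ i, Complex.normSq (v i)) = 1 ∧ r = (dotProduct (star v) (B.mulVec v)).re}

/-- Largest eigenvalue of a (Hermitian) complex matrix, via the Rayleigh quotient. -/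
def lamMaxC {n : Type*} [Fintype n] (B : Matrix n n ℂ) : ℝ :=
  sSup {r | ∃ v : n → ℂ,
    (∑ i, Complex.normSq (v i)) = 1 ∧ r = (dotProduct (star v) (B.mulVec v)).re}

/-- The matrix polynomial `𝒜(z) = I - M z` (complexified). -/
def charA {n : Type*} [Fintype n] [DecidableEq n] (M : Matrix n n ℝ) (z : ℂ) :
    Matrix n n ℂ :=
  1 - z • (M.map fun x => (x : ℂ))

/-- `μ_min(𝒜) = min_{|z|=1} λ_min(𝒜*(z)𝒜(z))`. -/
def muMin {n : Type*} [Fintype n] [DecidableEq n] (M : Matrix n n ℝ) : ℝ :=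
  sInf {r | ∃ z : ℂ, ‖z‖ = 1 ∧ r = lamMinC ((charA M z)ᴴ * charA M z)}

/-- `μ_max(𝒜) = max_{|z|=1} λ_max(𝒜*(z)𝒜(z))`. -/
def muMax {n : Type*} [Fintype n] [DecidableEq n] (M : Matrix n n ℝ) : ℝ :=
  sSup {r | ∃ z : ℂ, ‖z‖ = 1 ∧ r = lamMaxC ((charA M z)ᴴ * charA M z)}

/-- `M₁ = λ_max(Sigma_e)/μ_min(𝒜)^{1/2}`. -/
def M1c {n : Type*} [Fintype n] [DecidableEq n] (M Se : Matrix n n ℝ) : ℝ :=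
  lamMaxR Se / Real.sqrt (muMin M)

/-- `M₂ = λ_min(Sigma_e)μ_max(𝒜)/(λ_max(Sigma_e)μ_min(𝒜))`. -/
def M2c {n : Type*} [Fintype n] [DecidableEq n] (M Se : Matrix n n ℝ) : ℝ :=
  lamMinR Se * muMax M / (lamMaxR Se * muMin M)

/-- `α_RSC = λ_min(Sigma_e)/μ_max(𝒜)`. -/
def alphaRSC {n : Type*} [Fintype n] [DecidableEq n] (M Se : Matrix n n ℝ) : ℝ :=
  lamMinR Se / muMax M

/-- Assumptions 1 and 2 of the paper: `ξ` is an i.i.d. sequence of mean-zero, isotropic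
random vectors with mutually independent `κ²`-sub-Gaussian entries; `Se2` is the positive
semidefinite square root of the positive definite covariance matrix `Se` (so that
`e_t = Sigma_e^{1/2} ξ_t`), and the VAR transition matrix `𝒜_{[S₂]}` has spectral radius
strictly less than one. -/
structure IsTAR {Ω : Type*} [MeasurableSpace Ω] (P : Measure Ω) (A : Tensor2 p)
    (ξ : ℤ → Ω → TIndex p → ℝ) (Se Se2 : Matrix (TIndex p) (TIndex p) ℝ) (κ : ℝ) :
    Prop where
  prob : IsProbabilityMeasure P
  meas : ∀ t, Measurable (ξ t)
  indep : iIndepFun ξ P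
  ident : ∀ s t : ℤ, Measure.map (ξ s) P = Measure.map (ξ t) P
  entries_indep : ∀ t : ℤ, iIndepFun (fun i ω => ξ t ω i) P
  mean_zero : ∀ t i, ∫ ω, ξ t ω i ∂P = 0
  cov_id : ∀ t (i j : TIndex p), ∫ ω, ξ t ω i * ξ t ω j ∂P = if i = j then 1 else 0
  subgauss : ∀ t i (μ : ℝ), ∫ ω, Real.exp (μ * ξ t ω i) ∂P ≤ Real.exp (κ ^ 2 * μ ^ 2 / 2)
  sigma_posdef : Se.PosDef
  sqrt_psd : Se2.PosSemidef
  sqrt_eq : Se2 * Se2 = Se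
  stable : ∀ z : ℂ, z ∈ spectrum ℂ ((varMat A).map fun x => (x : ℂ)) → ‖z‖ < 1

/-- The error process `e_t = Sigma_e^{1/2} ξ_t` (as a vector/tensor in `ℝ^p`). -/
def errOf {Ω : Type*} (Se2 : Matrix (TIndex p) (TIndex p) ℝ)
    (ξ : ℤ → Ω → TIndex p → ℝ) : ℤ → Ω → Tensor p :=
  fun t ω => Se2.mulVec (ξ t ω)

/-- The unique strictly stationary solution `y_t = Σ_{j≥0} (𝒜_{[S₂]})^j e_{t-j}`. -/
def statSol {Ω : Type*} (A : Tensor2 p) (e : ℤ → Ω → Tensor p) : ℤ → Ω → Tensor p :=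
  fun t ω => ∑' j : ℕ, ((varMat A) ^ j).mulVec (e (t - (j : ℤ)) ω)

/-- The squared-Frobenius-loss `T⁻¹ Σ_{t=1}^T ‖𝒴_t - ⟨B, 𝒴_{t-1}⟩‖_F²`. -/
def sqLoss (Y : ℤ → Tensor p) (T : ℕ) (B : Tensor2 p) : ℝ :=
  ((T : ℝ))⁻¹ * ∑ t ∈ Finset.Icc (1 : ℤ) (T : ℤ),
    tfrob (fun j => Y t j - contract B (Y (t - 1)) j) ^ 2

/-- The deviation tensor `T⁻¹ Σ_{t=1}^T 𝒴_{t-1} ∘ ℰ_t`. -/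
def devTensor (Y E : ℤ → Tensor p) (T : ℕ) : Tensor2 p :=
  fun i j => ((T : ℝ))⁻¹ * ∑ t ∈ Finset.Icc (1 : ℤ) (T : ℤ), Y (t - 1) i * E t j

/-- Moore–Penrose pseudoinverse (well defined by existence and uniqueness of the
matrix satisfying the four Penrose equations). -/
def mpInv {m n : Type*} [Fintype m] [Fintype n] [DecidableEq m] [DecidableEq n]
    (A : Matrix m n ℝ) : Matrix n m ℝ :=
  if h : ∃ X : Matrix n m ℝ, A * X * A = A ∧ X * A * X = X ∧ (A * X)ᵀ = A * X ∧
      (X * A)ᵀ = X * A then h.choose else 0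

end TAR
namespace TAR

variable {d : ℕ} {p : Fin d → ℕ}

/-! ### Subspace projections built from the SVD of a matrix

`M₀ * mpInv M₀` (resp. `mpInv M₀ * M₀`) is the orthogonal projection onto the column
(resp. row) space of `M₀`, i.e. onto the span of the top `rank M₀` left (resp. right)
singular vectors of `M₀`. -/

/-- Projection of `W` onto `ℳ̄⊥` (column space orthogonal to that of `M₀`, row space
orthogonal to that of `M₀ᵀ`). -/
def projBarPerp {m n : Type*} [Fintype m] [Fintype n] [DecidableEq m] [DecidableEq n]
    (M0 W : Matrix m n ℝ) : Matrix m n ℝ :=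
  (1 - M0 * mpInv M0) * W * (1 - mpInv M0 * M0)

/-- Projection of `W` onto `ℳ̄`, the orthogonal complement of `ℳ̄⊥`. -/
def projBar {m n : Type*} [Fintype m] [Fintype n] [DecidableEq m] [DecidableEq n]
    (M0 W : Matrix m n ℝ) : Matrix m n ℝ :=
  W - projBarPerp M0 W

/-- Projection of `W` onto `ℳ⊥`, the orthogonal complement of
`ℳ = {M : col(M) ⊆ 𝒰, col(Mᵀ) ⊆ 𝒱}`. -/
def projMperp {m n : Type*} [Fintype m] [Fintype n] [DecidableEq m] [DecidableEq n]
    (M0 W : Matrix m n ℝ) : Matrix m n ℝ :=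
  W - (M0 * mpInv M0) * W * (mpInv M0 * M0)

/-- The restricted error set `ℂ_SSN(ℳ̄)`. -/
def coneSSN [NeZero d] (A : Tensor2 p) : Set (Tensor2 p) :=
  {Δ | ∑ ε : SqSel d, nucNorm (projBarPerp (mmat (sqSet ε.1) A) (mmat (sqSet ε.1) Δ)) ≤
      3 * ∑ ε : SqSel d, nucNorm (projBar (mmat (sqSet ε.1) A) (mmat (sqSet ε.1) Δ)) +
      4 * ∑ ε : SqSel d, nucNorm (projMperp (mmat (sqSet ε.1) A) (mmat (sqSet ε.1) A))}

/-- The restricted error set `ℂ_SN(𝒩̄)`. -/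
def coneSN (A : Tensor2 p) : Set (Tensor2 p) :=
  {Δ | ∑ m : Modes d, nucNorm (projBarPerp (umat m A) (umat m Δ)) ≤
      3 * ∑ m : Modes d, nucNorm (projBar (umat m A) (umat m Δ)) +
      4 * ∑ m : Modes d, nucNorm (projMperp (umat m A) (umat m A))}

/-- The restricted error set `ℂ_MN(ℳ̄₁)`. -/
def coneMN (A : Tensor2 p) : Set (Tensor2 p) :=
  {Δ | nucNorm (projBarPerp (mmat (S1 d) A) (mmat (S1 d) Δ)) ≤
      3 * nucNorm (projBar (mmat (S1 d) A) (mmat (S1 d) Δ)) +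
      4 * nucNorm (projMperp (mmat (S1 d) A) (mmat (S1 d) A))}

/-- Restricted strong convexity of the square loss with curvature `α` over the set `C`. -/
def RSCond (Y : ℤ → Tensor p) (T : ℕ) (α : ℝ) (C : Set (Tensor2 p)) : Prop :=
  ∀ Δ ∈ C, α * t2frob Δ ^ 2 ≤
    ((T : ℝ))⁻¹ * ∑ t ∈ Finset.Icc (1 : ℤ) (T : ℤ), tfrob (contract Δ (Y (t - 1))) ^ 2

/-- Objective function of the SSN-regularized estimator. -/
def objSSN [NeZero d] (Y : ℤ → Tensor p) (T : ℕ) (lam : ℝ) (B : Tensor2 p) : ℝ :=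
  sqLoss Y T B + lam * ssnNorm B

/-- Objective function of the SN-regularized estimator. -/
def objSN (Y : ℤ → Tensor p) (T : ℕ) (lam : ℝ) (B : Tensor2 p) : ℝ :=
  sqLoss Y T B + lam * snNorm B

/-- Objective function of the MN-regularized estimator. -/
def objMN (Y : ℤ → Tensor p) (T : ℕ) (lam : ℝ) (B : Tensor2 p) : ℝ :=
  sqLoss Y T B + lam * nucNorm (mmat (S1 d) B)

/-- The error tensor `ℰ_t = 𝒴_t - ⟨𝒜, 𝒴_{t-1}⟩` determined by observations and `𝒜`. -/
def errResid (A : Tensor2 p) (Y : ℤ → Tensor p) : ℤ → Tensor p :=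
  fun t j => Y t j - contract A (Y (t - 1)) j

/-- `p₋ᵢ = p / pᵢ = ∏_{j ≠ i} p_j`. -/
def pmi (p : Fin d → ℕ) (i : Fin d) : ℕ := ∏ j ∈ Finset.univ.erase i, p j

/-- `p = ∏ᵢ pᵢ`. -/
def pprod (p : Fin d → ℕ) : ℕ := ∏ j, p j

end TAR
namespace TAR

variable {d : ℕ} {p : Fin d → ℕ}

/-! ### Tucker decomposition, parametrization and its Jacobian -/

/-- Core-tensor multi-index over the first `d` modes, for multilinear ranks `r`. -/
abbrev CIdxL (r : Modes d → ℕ) := ∀ k : Fin d, Fin (r (Sum.inl k))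

/-- Core-tensor multi-index over the last `d` modes. -/
abbrev CIdxR (r : Modes d → ℕ) := ∀ k : Fin d, Fin (r (Sum.inr k))

/-- Index of an entry of one of the `2d` factor matrices. -/
abbrev FacIdx (p : Fin d → ℕ) (r : Modes d → ℕ) :=
  (m : Modes d) × (Fin (mdim p m) × Fin (r m))

/-- Index of a coordinate of the parameter vector
`θ = (vec(𝒢), vec(U₁), …, vec(U₂d))`. -/
abbrev ThetaIdx (p : Fin d → ℕ) (r : Modes d → ℕ) := (CIdxL r × CIdxR r) ⊕ FacIdx p r

/-- The Tucker product `𝒢 ×₁ U₁ ⋯ ×₂d U₂d`. -/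
def tucker (r : Modes d → ℕ) (G : CIdxL r → CIdxR r → ℝ)
    (U : ∀ m : Modes d, Matrix (Fin (mdim p m)) (Fin (r m)) ℝ) : Tensor2 p :=
  fun i j => ∑ a, ∑ b,
    G a b * (∏ k, U (Sum.inl k) (i k) (a k)) * (∏ k, U (Sum.inr k) (j k) (b k))

/-- The parametrization map `h(θ) = vec(𝒜_{[S₂]})`, as a function of the packed
parameter vector; the value at `q = (response index, predictor index)` is the
corresponding entry of the transition matrix. -/
def hmap (p : Fin d → ℕ) (r : Modes d → ℕ) (θ : ThetaIdx p r → ℝ) :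
    (TIndex p × TIndex p) → ℝ :=
  fun q => ∑ a : CIdxL r, ∑ b : CIdxR r,
    θ (Sum.inl (a, b)) * (∏ k, θ (Sum.inr ⟨Sum.inl k, (q.2 k, a k)⟩)) *
      (∏ k, θ (Sum.inr ⟨Sum.inr k, (q.1 k, b k)⟩))

/-- Packing of the Tucker components into a parameter vector. -/
def pack (r : Modes d → ℕ) (G : CIdxL r → CIdxR r → ℝ)
    (U : ∀ m : Modes d, Matrix (Fin (mdim p m)) (Fin (r m)) ℝ) : ThetaIdx p r → ℝ :=
  fun x => match x with
    | Sum.inl ab => G ab.1 ab.2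
    | Sum.inr mc => U mc.1 mc.2.1 mc.2.2

/-- The Jacobian `H = ∂h(θ)/∂θ` of the parametrization map, evaluated at the packed
true parameters, written as a matrix. -/
def jacobianH (p : Fin d → ℕ) (r : Modes d → ℕ) (G : CIdxL r → CIdxR r → ℝ)
    (U : ∀ m : Modes d, Matrix (Fin (mdim p m)) (Fin (r m)) ℝ) :
    Matrix (TIndex p × TIndex p) (ThetaIdx p r) ℝ :=
  LinearMap.toMatrix'
    ((fderiv ℝ (hmap p r) (pack r G U) : (ThetaIdx p r → ℝ) →L[ℝ] ((TIndex p × TIndex p) → ℝ)) :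
      (ThetaIdx p r → ℝ) →ₗ[ℝ] ((TIndex p × TIndex p) → ℝ))

/-- The covariance matrix `Σ_y = var(y_t)` of the (mean-zero) stationary process. -/
def sigmaY {Ω : Type*} [MeasurableSpace Ω] (P : MeasureTheory.Measure Ω)
    (Y0 : Ω → Tensor p) : Matrix (TIndex p) (TIndex p) ℝ :=
  Matrix.of fun i j => ∫ ω, Y0 ω i * Y0 ω j ∂P

/-- The positive semidefinite square root of a positive semidefinite matrix
(well defined by existence and uniqueness). -/
def matPsdSqrt {n : Type*} [Fintype n] [DecidableEq n] (S : Matrix n n ℝ) :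
    Matrix n n ℝ :=
  if h : ∃ R : Matrix n n ℝ, R.PosSemidef ∧ R * R = S then h.choose else 0

/-- The centered multivariate normal distribution `N(0, S)` on `n → ℝ`, realized as the
image of a standard Gaussian under multiplication by `S^{1/2}`. -/
def gaussianOf {n : Type*} [Fintype n] [DecidableEq n] (S : Matrix n n ℝ) :
    MeasureTheory.Measure (n → ℝ) :=
  MeasureTheory.Measure.map (fun x => (matPsdSqrt S).mulVec x)
    (MeasureTheory.Measure.pi fun _ : n => ProbabilityTheory.gaussianReal 0 1)

/-- Convergence in distribution: the laws of `X T` converge weakly to `μ`, i.e.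
expectations of every bounded continuous function converge. -/
def TendstoInDist {Ω : Type*} [MeasurableSpace Ω] (P : MeasureTheory.Measure Ω)
    {E : Type*} [MeasurableSpace E] [TopologicalSpace E]
    (X : ℕ → Ω → E) (μ : MeasureTheory.Measure E) : Prop :=
  ∀ f : BoundedContinuousFunction E ℝ,
    Filter.Tendsto (fun T => ∫ ω, f (X T ω) ∂P) Filter.atTop (nhds (∫ x, f x ∂μ))

/-- The (unnormalized) least squares loss `Σ_{t=1}^T ‖𝒴_t - ⟨B, 𝒴_{t-1}⟩‖_F²`. -/
def lossSum (Y : ℤ → Tensor p) (T : ℕ) (B : Tensor2 p) : ℝ :=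
  ∑ t ∈ Finset.Icc (1 : ℤ) (T : ℤ), tfrob (fun j => Y t j - contract B (Y (t - 1)) j) ^ 2

/-! ### Truncation of the HOSVD -/

/-- Gram matrix `B Bᵀ` of the mode-`(Sum.inl k)` matricization `B` of `A`. -/
def gramL (k : Fin d) (A : Tensor2 p) : Matrix (Fin (p k)) (Fin (p k)) ℝ :=
  Matrix.of fun x x' => ∑ i : TIndex p, ∑ j : TIndex p,
    if i k = x' then A (Function.update i k x) j * A i j else 0

/-- Gram matrix `B Bᵀ` of the mode-`(Sum.inr k)` matricization `B` of `A`. -/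
def gramR (k : Fin d) (A : Tensor2 p) : Matrix (Fin (p k)) (Fin (p k)) ℝ :=
  Matrix.of fun x x' => ∑ i : TIndex p, ∑ j : TIndex p,
    if j k = x' then A i (Function.update j k x) * A i j else 0

/-- Gram matrix of the mode-`m` matricization of `A`. -/
def gram (m : Modes d) (A : Tensor2 p) : Matrix (Fin (mdim p m)) (Fin (mdim p m)) ℝ :=
  match m with
  | Sum.inl k => gramL k A
  | Sum.inr k => gramR k A

/-- `Ũ Ũᵀ`, the orthogonal projection onto the span of the left singular vectors with
singular value exceeding `γ`: the sum of `v vᵀ` over the eigenvectors `v` of the Gram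
matrix `G = B Bᵀ` whose eigenvalue has square root exceeding `γ`. -/
def truncProj {n : Type*} [Fintype n] [DecidableEq n] (G : Matrix n n ℝ) (γ : ℝ) :
    Matrix n n ℝ :=
  if hG : G.IsHermitian then
    ∑ j, if γ < Real.sqrt (hG.eigenvalues j) then
      Matrix.vecMulVec (fun i => hG.eigenvectorBasis j i) (fun i => hG.eigenvectorBasis j i)
    else 0
  else 0

/-- Multiplication of a `2d`-th order tensor by a square matrix along each mode. -/
def modeMulAll (Pm : ∀ m : Modes d, Matrix (Fin (mdim p m)) (Fin (mdim p m)) ℝ)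
    (A : Tensor2 p) : Tensor2 p :=
  fun i j => ∑ i' : TIndex p, ∑ j' : TIndex p,
    (∏ k, Pm (Sum.inl k) (i k) (i' k)) * (∏ k, Pm (Sum.inr k) (j k) (j' k)) * A i' j'

/-- The truncated estimator `Â_TSSN = 𝒢̃ ×ᵢ Ũᵢ = Â ×ᵢ (Ũᵢ Ũᵢᵀ)` obtained from `Â` by
retaining, in each mode, only the singular values greater than `γ`. -/
def tssnOf (Ahat : Tensor2 p) (γ : ℝ) : Tensor2 p :=
  modeMulAll (fun m => truncProj (gram m Ahat) γ) Ahat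

end TAR
namespace TAR

variable {d : ℕ} {p : Fin d → ℕ}

lemma opNorm_nonneg' {m n : Type*} [Fintype m] [Fintype n] (M : Matrix m n ℝ) :
    0 ≤ opNorm M := by
  apply Real.sSup_nonneg
  rintro r ⟨v, -, rfl⟩
  exact Real.sqrt_nonneg _

lemma opNorm_bddAbove' {m n : Type*} [Fintype m] [Fintype n] (M : Matrix m n ℝ) :
    BddAbove {r | ∃ v : n → ℝ, (∑ j, v j ^ 2) ≤ 1 ∧ r = Real.sqrt (∑ i, (M.mulVec v i) ^ 2)} := by
  refine ⟨Real.sqrt (∑ i, ∑ j, M i j ^ 2), ?_⟩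
  rintro r ⟨v, hv, rfl⟩
  apply Real.sqrt_le_sqrt
  refine Finset.sum_le_sum fun i _ => ?_
  have h := Finset.sum_mul_sq_le_sq_mul_sq Finset.univ (fun j => M i j) v
  calc (M.mulVec v i) ^ 2 = (∑ j, M i j * v j) ^ 2 := rfl
    _ ≤ (∑ j, M i j ^ 2) * ∑ j, v j ^ 2 := h
    _ ≤ (∑ j, M i j ^ 2) * 1 := by
        have : (0:ℝ) ≤ ∑ j, M i j ^ 2 := Finset.sum_nonneg fun j _ => sq_nonneg _
        exact mul_le_mul_of_nonneg_left hv this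
    _ = ∑ j, M i j ^ 2 := mul_one _

lemma sqrt_mulVec_le_opNorm' {m n : Type*} [Fintype m] [Fintype n] (M : Matrix m n ℝ)
    {v : n → ℝ} (hv : (∑ j, v j ^ 2) ≤ 1) :
    Real.sqrt (∑ i, (M.mulVec v i) ^ 2) ≤ opNorm M :=
  le_csSup (opNorm_bddAbove' M) ⟨v, hv, rfl⟩

lemma singVals_nonneg' {m n : Type*} [Fintype m] [Fintype n] [DecidableEq n]
    (M : Matrix m n ℝ) (i : n) : 0 ≤ singVals M i := Real.sqrt_nonneg _

lemma nucNorm_nonneg' {m n : Type*} [Fintype m] [Fintype n] [DecidableEq n]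
    (M : Matrix m n ℝ) : 0 ≤ nucNorm M :=
  Finset.sum_nonneg fun i _ => singVals_nonneg' M i

/-- von Neumann-type trace inequality: `⟨A, B⟩ ≤ ‖A‖_op ‖B‖_*`. -/
lemma sum_mul_le_opNorm_mul_nucNorm {m n : Type*} [Fintype m] [Fintype n] [DecidableEq n]
    (A B : Matrix m n ℝ) :
    ∑ i, ∑ j, A i j * B i j ≤ opNorm A * nucNorm B := by
  have hH : (Bᴴ * B).IsHermitian := Matrix.isHermitian_conjTranspose_mul_self B
  set v : n → (n → ℝ) := fun k => ⇑(hH.eigenvectorBasis k) with hv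
  have horth : ∀ k l, ∑ j, v k j * v l j = if k = l then 1 else 0 := by
    intro k l
    have h := orthonormal_iff_ite.mp hH.eigenvectorBasis.orthonormal k l
    simpa [PiLp.inner_apply, RCLike.inner_apply, hv, mul_comm] using h
  set V : Matrix n n ℝ := Matrix.of fun j k => v k j with hV
  have hVtV : Vᵀ * V = 1 := by
    ext k l
    simpa [Matrix.mul_apply, hV, Matrix.one_apply] using horth k l
  have hVVt : V * Vᵀ = 1 := mul_eq_one_comm.mp hVtV
  have hcomp : ∀ j j', ∑ k, v k j * v k j' = if j = j' then 1 else 0 := by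
    intro j j'
    have h2 : (V * Vᵀ) j j' = (1 : Matrix n n ℝ) j j' := by rw [hVVt]
    simpa [Matrix.mul_apply, hV, Matrix.one_apply] using h2
  have expand : ∀ k i, (A.mulVec (v k) i) * (B.mulVec (v k) i)
      = ∑ j, ∑ j', A i j * B i j' * (v k j * v k j') := by
    intro k i
    show (∑ j, A i j * v k j) * (∑ j', B i j' * v k j') = _
    rw [Finset.sum_mul_sum]
    exact Finset.sum_congr rfl fun j _ => Finset.sum_congr rfl fun j' _ => by ring
  have htrace : ∑ k, ∑ i, (A.mulVec (v k) i) * (B.mulVec (v k) i)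
      = ∑ i, ∑ j, A i j * B i j := by
    simp only [expand]
    rw [Finset.sum_comm]
    refine Finset.sum_congr rfl fun i _ => ?_
    rw [Finset.sum_comm]
    calc ∑ j, ∑ k, ∑ j', A i j * B i j' * (v k j * v k j')
        = ∑ j, ∑ j', A i j * B i j' * ∑ k, v k j * v k j' := by
          refine Finset.sum_congr rfl fun j _ => ?_
          rw [Finset.sum_comm]
          exact Finset.sum_congr rfl fun j' _ => by rw [Finset.mul_sum]
      _ = ∑ j, A i j * B i j := by
          simp only [hcomp]
          simp
  have hBv : ∀ k, ∑ i, (B.mulVec (v k) i) ^ 2 = hH.eigenvalues k := by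
    intro k
    have hval := hH.mulVec_eigenvectorBasis k
    have hdot : (v k) ⬝ᵥ ((Bᴴ * B) *ᵥ (v k)) = ∑ i, (B.mulVec (v k) i) ^ 2 := by
      rw [← Matrix.mulVec_mulVec]
      set w : m → ℝ := B.mulVec (v k) with hw
      show ∑ j, v k j * (∑ i, Bᴴ j i * w i) = ∑ i, w i ^ 2
      simp only [Matrix.conjTranspose_apply, star_trivial, Finset.mul_sum]
      rw [Finset.sum_comm]
      refine Finset.sum_congr rfl fun i _ => ?_
      have h3 : ∑ j, v k j * (B i j * w i) = (∑ j, B i j * v k j) * w i := by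
        rw [Finset.sum_mul]
        exact Finset.sum_congr rfl fun j _ => by ring
      rw [h3]
      have h4 : (∑ j, B i j * v k j) = w i := rfl
      rw [h4, pow_two]
    have hvk1 : (v k) ⬝ᵥ (v k) = 1 := by simpa [dotProduct] using horth k k
    calc ∑ i, (B.mulVec (v k) i) ^ 2 = (v k) ⬝ᵥ ((Bᴴ * B) *ᵥ (v k)) := hdot.symm
      _ = (v k) ⬝ᵥ (hH.eigenvalues k • v k) := by rw [hval]
      _ = hH.eigenvalues k * ((v k) ⬝ᵥ (v k)) := by
          simp only [dotProduct, Pi.smul_apply, smul_eq_mul, Finset.mul_sum]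
          exact Finset.sum_congr rfl fun j _ => by ring
      _ = hH.eigenvalues k := by rw [hvk1, mul_one]
  have hk : ∀ k, ∑ i, (A.mulVec (v k) i) * (B.mulVec (v k) i)
      ≤ opNorm A * singVals B k := by
    intro k
    have hvnorm : (∑ j, v k j ^ 2) ≤ 1 := by
      have h := horth k k
      simp at h
      simp only [pow_two]
      exact le_of_eq h
    have hcs := Real.sum_mul_le_sqrt_mul_sqrt Finset.univ (A.mulVec (v k)) (B.mulVec (v k))
    refine hcs.trans ?_
    have h1 : Real.sqrt (∑ i, (A.mulVec (v k) i) ^ 2) ≤ opNorm A :=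
      sqrt_mulVec_le_opNorm' A hvnorm
    have h2 : Real.sqrt (∑ i, (B.mulVec (v k) i) ^ 2) = singVals B k := by
      rw [hBv k]; rfl
    rw [h2]
    exact mul_le_mul_of_nonneg_right h1 (singVals_nonneg' B k)
  calc ∑ i, ∑ j, A i j * B i j
      = ∑ k, ∑ i, (A.mulVec (v k) i) * (B.mulVec (v k) i) := htrace.symm
    _ ≤ ∑ k, opNorm A * singVals B k := Finset.sum_le_sum fun k _ => hk k
    _ = opNorm A * nucNorm B := by rw [nucNorm, Finset.mul_sum]

/-- Reassemble a pair of tensor indices from a mode label. -/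
def pick (i j : TIndex p) : ∀ m : Modes d, Fin (mdim p m)
  | Sum.inl k => i k
  | Sum.inr k => j k

/-- Inverse of the matricization index splitting. -/
def unsplit (S : Set (Modes d)) :
    ((∀ m : S, Fin (mdim p (m : Modes d))) ×
      (∀ m : (Sᶜ : Set (Modes d)), Fin (mdim p (m : Modes d)))) → TIndex p × TIndex p :=
  fun rc =>
    (fun k => if h : Sum.inl k ∈ S then rc.1 ⟨Sum.inl k, h⟩ else rc.2 ⟨Sum.inl k, h⟩,
     fun k => if h : Sum.inr k ∈ S then rc.1 ⟨Sum.inr k, h⟩ else rc.2 ⟨Sum.inr k, h⟩)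

lemma unsplit_bijective (S : Set (Modes d)) : Function.Bijective (unsplit (p := p) S) := by
  rw [Function.bijective_iff_has_inverse]
  refine ⟨fun ij => (fun m => pick ij.1 ij.2 m.1, fun m => pick ij.1 ij.2 m.1), ?_, ?_⟩
  · rintro ⟨r, c⟩
    refine Prod.ext ?_ ?_ <;> funext m <;> obtain ⟨x, hx⟩ := m <;> rcases x with k | k <;>
      simp only [unsplit, pick] <;>
      first
        | exact dif_pos hx
        | exact dif_neg hx
  · rintro ⟨i, j⟩
    refine Prod.ext (funext fun k => ?_) (funext fun k => ?_)
    · by_cases h : Sum.inl k ∈ S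
      · simp only [unsplit]; exact dif_pos h
      · simp only [unsplit]; exact dif_neg h
    · by_cases h : Sum.inr k ∈ S
      · simp only [unsplit]; exact dif_pos h
      · simp only [unsplit]; exact dif_neg h

/-- Matricization preserves the entrywise inner product. -/
lemma t2inner_eq_mmat (S : Set (Modes d))
    [instR : Fintype (∀ m : S, Fin (mdim p (m : Modes d)))]
    [instC : Fintype (∀ m : (Sᶜ : Set (Modes d)), Fin (mdim p (m : Modes d)))]
    (A B : Tensor2 p) :
    t2inner A B = ∑ r, ∑ c, mmat S A r c * mmat S B r c := by
  have h1 := Fintype.sum_bijective (unsplit (p := p) S) (unsplit_bijective S)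
      (fun rc : (∀ m : S, Fin (mdim p (m : Modes d))) ×
          (∀ m : (Sᶜ : Set (Modes d)), Fin (mdim p (m : Modes d))) =>
        mmat S A rc.1 rc.2 * mmat S B rc.1 rc.2)
      (fun ij : TIndex p × TIndex p => A ij.1 ij.2 * B ij.1 ij.2) (fun rc => rfl)
  calc t2inner A B
      = ∑ ij : TIndex p × TIndex p, A ij.1 ij.2 * B ij.1 ij.2 :=
        (Fintype.sum_prod_type (f := fun ij : TIndex p × TIndex p => A ij.1 ij.2 * B ij.1 ij.2)).symm
    _ = _ := h1.symm
    _ = ∑ r, ∑ c, mmat S A r c * mmat S B r c :=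
        Fintype.sum_prod_type (f := fun rc : (∀ m : S, Fin (mdim p (m : Modes d))) ×
          (∀ m : (Sᶜ : Set (Modes d)), Fin (mdim p (m : Modes d))) =>
            mmat S A rc.1 rc.2 * mmat S B rc.1 rc.2)

/-- AM–HM averaging bound for the dual-norm argument. -/
lemma avg_bound {ι : Type*} [Fintype ι] [Nonempty ι] {I : ℝ} {a t : ι → ℝ}
    (ha : ∀ k, 0 ≤ a k) (ht : ∀ k, 0 ≤ t k) (hsum : ∑ k, t k ≤ 1)
    (hI : ∀ k, I ≤ a k * t k) :
    I ≤ ((Fintype.card ι : ℝ) ^ 2)⁻¹ * ∑ k, a k := by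
  have hsa : (0:ℝ) ≤ ∑ k, a k := Finset.sum_nonneg fun k _ => ha k
  rcases le_or_gt I 0 with h0 | h0
  · exact h0.trans (mul_nonneg (inv_nonneg.2 (sq_nonneg _)) hsa)
  have hapos : ∀ k, 0 < a k := by
    intro k
    rcases (ha k).lt_or_eq with h | h
    · exact h
    · exact absurd ((hI k).trans_eq (by rw [← h, zero_mul])) (not_le.mpr h0)
  have hstep : I * ∑ k, (a k)⁻¹ ≤ 1 := by
    rw [Finset.mul_sum]
    refine le_trans (Finset.sum_le_sum fun k _ => ?_) hsum
    rw [← div_eq_mul_inv, div_le_iff₀ (hapos k)]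
    calc I ≤ a k * t k := hI k
      _ = t k * a k := mul_comm _ _
  have hcard : (0:ℝ) < (Fintype.card ι : ℝ) := by exact_mod_cast Fintype.card_pos
  have hCS : (Fintype.card ι : ℝ) ^ 2 ≤ (∑ k, a k) * ∑ k, (a k)⁻¹ := by
    have h := Finset.sum_mul_sq_le_sq_mul_sq Finset.univ
      (fun k => Real.sqrt (a k)) (fun k => (Real.sqrt (a k))⁻¹)
    have h1 : ∀ k : ι, Real.sqrt (a k) * (Real.sqrt (a k))⁻¹ = 1 := fun k =>
      mul_inv_cancel₀ (ne_of_gt (Real.sqrt_pos.mpr (hapos k)))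
    have h2 : ∀ k : ι, Real.sqrt (a k) ^ 2 = a k := fun k => Real.sq_sqrt (ha k)
    have h3 : ∀ k : ι, ((Real.sqrt (a k))⁻¹) ^ 2 = (a k)⁻¹ := fun k => by
      rw [inv_pow, h2 k]
    simpa only [h1, h2, h3, Finset.sum_const, Finset.card_univ, nsmul_eq_mul, mul_one] using h
  rw [inv_mul_eq_div, le_div_iff₀ (by positivity)]
  calc I * (Fintype.card ι : ℝ) ^ 2 ≤ I * ((∑ k, a k) * ∑ k, (a k)⁻¹) :=
        mul_le_mul_of_nonneg_left hCS h0.le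
    _ = (I * ∑ k, (a k)⁻¹) * ∑ k, a k := by ring
    _ ≤ 1 * ∑ k, a k := mul_le_mul_of_nonneg_right hstep hsa
    _ = ∑ k, a k := one_mul _

lemma card_sqSel (d : ℕ) [NeZero d] : Fintype.card (SqSel d) = 2 ^ (d - 1) := by
  have e : SqSel d ≃ ({ i : Fin d // i ≠ 0 } → Bool) :=
    { toFun := fun ε j => ε.1 j.1
      invFun := fun g => ⟨fun i => if h : i = 0 then false else g ⟨i, h⟩, by simp⟩
      left_inv := fun ε => Subtype.ext (funext fun i => by
        by_cases h : i = 0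
        · subst h; simp [ε.2]
        · simp [h])
      right_inv := fun g => funext fun j => by simp [j.2] }
  rw [Fintype.card_congr e, Fintype.card_fun, Fintype.card_bool]
  congr 1
  have := Fintype.card_subtype_compl (fun i : Fin d => i = 0)
  simp only [Fintype.card_subtype_eq, Fintype.card_fin] at this
  exact this

end TAR
set_option maxHeartbeats 2000000 in
open TAR in
/-- upper bounds for the dual norms of the SSN and SN norms in terms of
operator norms of the square (resp. one-mode) matricizations. -/
theorem ssn_sn_dual_norm_upper_bounds
    {d : ℕ} [NeZero d] {p : Fin d → ℕ} (W : Tensor2 p) :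
    ssnDual W ≤
        ((2 : ℝ) ^ (2 * (d - 1)))⁻¹ * ∑ ε : SqSel d, opNorm (mmat (sqSet ε.1) W) ∧
      snDual W ≤
        ((2 * (d : ℝ)) ^ 2)⁻¹ * ∑ m : Modes d, opNorm (umat m W) := by
  constructor
  · have hne : Nonempty (SqSel d) := ⟨⟨fun _ => false, rfl⟩⟩
    unfold ssnDual
    apply Real.sSup_le
    · rintro r ⟨T, hT, rfl⟩
      have key : ∀ ε : SqSel d, t2inner W T ≤
          opNorm (mmat (sqSet ε.1) W) * nucNorm (mmat (sqSet ε.1) T) := fun ε => by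
        rw [t2inner_eq_mmat (sqSet ε.1) W T]
        exact sum_mul_le_opNorm_mul_nucNorm _ _
      have hb := avg_bound (ι := SqSel d) (a := fun ε => opNorm (mmat (sqSet ε.1) W))
          (t := fun ε => nucNorm (mmat (sqSet ε.1) T))
          (fun ε => opNorm_nonneg' _) (fun ε => nucNorm_nonneg' _) hT key
      refine hb.trans (le_of_eq ?_)
      congr 2
      rw [card_sqSel d]
      push_cast
      rw [← pow_mul, Nat.mul_comm]
    · exact mul_nonneg (inv_nonneg.2 (by positivity))
        (Finset.sum_nonneg fun ε _ => opNorm_nonneg' _)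
  · have hne : Nonempty (Modes d) := ⟨Sum.inl ⟨0, Nat.pos_of_ne_zero (NeZero.ne d)⟩⟩
    unfold snDual
    apply Real.sSup_le
    · rintro r ⟨T, hT, rfl⟩
      have key : ∀ m : Modes d, t2inner W T ≤
          opNorm (umat m W) * nucNorm (umat m T) := fun m => by
        rw [t2inner_eq_mmat ({m} : Set (Modes d)) W T]
        exact sum_mul_le_opNorm_mul_nucNorm _ _
      have hb := avg_bound (ι := Modes d) (a := fun m => opNorm (umat m W))
          (t := fun m => nucNorm (umat m T)) (fun m => opNorm_nonneg' _)
          (fun m => nucNorm_nonneg' _) hT key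
      refine hb.trans (le_of_eq ?_)
      congr 2
      rw [Fintype.card_sum, Fintype.card_fin]
      push_cast
      ring
    · exact mul_nonneg (inv_nonneg.2 (by positivity))
        (Finset.sum_nonneg fun m _ => opNorm_nonneg' _)
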